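/- Let G be an SZF-complete graph and x ∈ V(G). Let G' be obtained from G by adding two new vertices y, z and the edges xy and yz. Then G' is SZF-complete. -/

import Mathlib

open Matrix
open scoped Classical

/-- A set is stalled (skew zero forcing closed) if no vertex has exactly one neighbor
outside the set. -/
def SZFStalled {V : Type*} (G : SimpleGraph V) (S : Set V) : Prop :=
  ∀ v w : V, G.Adj v w → w ∉ S → ∃ u : V, G.Adj v u ∧ u ∉ S ∧ u ≠ w

/-- A graph is SZF-complete if every skew zero forcing closed set of vertices is the zero
locus of some vector in the kernel of its adjacency matrix. -/
def SZFComplete {V : Type*} [Fintype V] [DecidableEq V] (G : SimpleGraph V) : Prop :=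
  ∀ S : Set V, SZFStalled G S →
    ∃ x : V → ℝ, G.adjMatrix ℝ *ᵥ x = 0 ∧ {v : V | x v = 0} = S

/-- The graph obtained from `G` by appending a path of length two at the vertex `x`:
new vertices `y = Sum.inr false` and `z = Sum.inr true`, with new edges `x y` and `y z`. -/
def extendByPath {V : Type*} (G : SimpleGraph V) (x : V) : SimpleGraph (V ⊕ Bool) :=
  SimpleGraph.fromRel (fun a b =>
    (∃ u v : V, a = Sum.inl u ∧ b = Sum.inl v ∧ G.Adj u v) ∨
    (a = Sum.inl x ∧ b = Sum.inr false) ∨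
    (a = Sum.inr false ∧ b = Sum.inr true))


/-!
A skew-zero-forcing-closed set `S` of the extended graph contains `y`, because `y` is the only
neighbour of `z`, and it contains `x` iff it contains `z`, because `x` and `z` are the only
neighbours of `y`. Its trace on `V` is closed in `G`, since the only new neighbour of an old
vertex is `y ∈ S`; hence it is the zero locus of a kernel vector `f` of `G`. Extending `f` by
`0` at `y` and `-f x` at `z` gives a kernel vector of the extended graph with zero locus `S`.
-/

namespace SZFStalled

variable {V : Type*} {G : SimpleGraph V} {S : Set V}

theorem mem_of_forall_adj_eq (hS : SZFStalled G S) {v w : V} (hvw : G.Adj v w)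
    (honly : ∀ u, G.Adj v u → u = w) : w ∈ S := by
  by_contra hw
  obtain ⟨u, hvu, -, huw⟩ := hS v w hvw hw
  exact huw (honly u hvu)

theorem mem_iff_of_forall_adj (hS : SZFStalled G S) {v a b : V} (hva : G.Adj v a)
    (hvb : G.Adj v b) (honly : ∀ u, G.Adj v u → u = a ∨ u = b) : a ∈ S ↔ b ∈ S := by
  have key : ∀ {p q}, G.Adj v q → (∀ u, G.Adj v u → u = p ∨ u = q) → p ∈ S → q ∈ S := by
    intro p q hvq honly hp
    by_contra hq
    obtain ⟨u, hvu, huS, huq⟩ := hS v q hvq hq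
    rcases honly u hvu with rfl | rfl
    exacts [huS hp, huq rfl]
  exact ⟨key hvb honly, key hva fun u hu => (honly u hu).symm⟩

theorem comap {W : Type*} {H : SimpleGraph W} {T : Set W} (hT : SZFStalled H T) (f : G ↪g H)
    (hout : ∀ v w, H.Adj (f v) w → w ∉ Set.range f → w ∈ T) : SZFStalled G (f ⁻¹' T) := by
  intro v w hvw hw
  obtain ⟨u, hvu, huT, huw⟩ := hT (f v) (f w) (f.map_rel_iff.2 hvw) hw
  obtain ⟨u, rfl⟩ : u ∈ Set.range f := by
    by_contra hu
    exact huT (hout v u hvu hu)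
  exact ⟨u, f.map_rel_iff.1 hvu, huT, fun h => huw (h ▸ rfl)⟩

end SZFStalled

namespace extendByPath

variable {V : Type*} {G : SimpleGraph V} {x : V}

@[simp]
theorem adj_inl_inl {u v : V} : (extendByPath G x).Adj (.inl u) (.inl v) ↔ G.Adj u v := by
  simp only [extendByPath, SimpleGraph.fromRel_adj, ne_eq, Sum.inl.injEq]
  constructor
  · rintro ⟨-, h | h⟩
    · simpa using h
    · exact (by simpa using h : G.Adj v u).symm
  · intro h
    exact ⟨h.ne, .inl (.inl ⟨u, v, rfl, rfl, h⟩)⟩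

@[simp]
theorem adj_inl_inr {u : V} {b : Bool} :
    (extendByPath G x).Adj (.inl u) (.inr b) ↔ u = x ∧ b = false := by
  simp [extendByPath]

@[simp]
theorem adj_inr_inl {u : V} {b : Bool} :
    (extendByPath G x).Adj (.inr b) (.inl u) ↔ u = x ∧ b = false := by
  rw [SimpleGraph.adj_comm, adj_inl_inr]

@[simp]
theorem adj_inr_inr {a b : Bool} : (extendByPath G x).Adj (.inr a) (.inr b) ↔ a ≠ b := by
  cases a <;> cases b <;> simp [extendByPath]

variable (G x) in
@[simps]
def inlEmbedding : G ↪g extendByPath G x where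
  toFun := Sum.inl
  inj' := Sum.inl_injective
  map_rel_iff' := adj_inl_inl

/-- The vertex `z` carries `-f x`, so that the equation at `y` reads `f x + (-f x) = 0`, while
`y` carries `0`, so that the equations at `x` and `z` are those of `f`. -/
def extendVec {R : Type*} [Neg R] [Zero R] (f : V → R) (x : V) : V ⊕ Bool → R :=
  Sum.elim f fun b => cond b (-f x) 0

theorem adjMatrix_mulVec_extendVec [Fintype V] {R : Type*} [Ring R]
    {f : V → R} (hf : G.adjMatrix R *ᵥ f = 0) :
    (extendByPath G x).adjMatrix R *ᵥ extendVec f x = 0 := by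
  funext a
  rcases a with v | _ | _
  · simpa [mulVec, dotProduct, SimpleGraph.adjMatrix_apply, Fintype.sum_sum_type, extendVec]
      using congrFun hf v
  all_goals
    simp [mulVec, dotProduct, SimpleGraph.adjMatrix_apply, Fintype.sum_sum_type, extendVec]

end extendByPath

/-- Appending a path of length two to an SZF-complete graph yields an
SZF-complete graph. -/
theorem stmt14 {V : Type*} [Fintype V] [DecidableEq V] (G : SimpleGraph V) (x : V)
    (hG : SZFComplete G) : SZFComplete (extendByPath G x) := by
  intro S hS
  have hy : .inr false ∈ S :=
    hS.mem_of_forall_adj_eq (v := .inr true) (by simp) (by rintro (u | _ | _) <;> simp)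
  have hxz : .inl x ∈ S ↔ .inr true ∈ S :=
    hS.mem_iff_of_forall_adj (v := .inr false) (by simp) (by simp)
      (by rintro (u | _ | _) <;> simp)
  have hSG : SZFStalled G (extendByPath.inlEmbedding G x ⁻¹' S) := by
    refine hS.comap _ ?_
    rintro v (w | b) hvw hw
    · exact absurd ⟨w, rfl⟩ hw
    · obtain ⟨-, rfl⟩ := extendByPath.adj_inl_inr.1 hvw
      exact hy
  obtain ⟨f, hf, hfS⟩ := hG _ hSG
  refine ⟨extendByPath.extendVec f x, extendByPath.adjMatrix_mulVec_extendVec hf, ?_⟩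
  ext (v | _ | _)
  · exact Set.ext_iff.1 hfS v
  · simpa [extendByPath.extendVec] using hy
  · simpa [extendByPath.extendVec, hxz] using Set.ext_iff.1 hfS x
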